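/- arXiv:0711.0057 — 2 statements merged into one kernel-verified Lean document; each statement's English description precedes it below -/
import Mathlib

section
/- Let (R, m) be a *local graded commutative Noetherian ring satisfying condition (P). If a graded ideal a has all its homogeneous elements contained in a finite union p₁ ∪ ⋯ ∪ pₙ of graded prime ideals, then a ⊆ pᵢ for some i. -/
open CategoryTheory

noncomputable section

abbrev extGrp (R : Type) [CommRing R] (k : ℕ) (M N : ModuleCat R) : ModuleCat R :=
  ((Ext R (ModuleCat R) k).obj (Opposite.op M)).obj N

def mGrade (R : Type) [CommRing R] (M : ModuleCat R) : ℕ∞ :=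
  sInf {n : ℕ∞ | ∃ k : ℕ, n = k ∧ Nontrivial (extGrp R k M (ModuleCat.of R R))}

def TotRefl (R : Type) [CommRing R] (M : ModuleCat R) : Prop :=
  Function.Bijective (Module.Dual.eval R M) ∧
  (∀ k : ℕ, 0 < k → Subsingleton (extGrp R k M (ModuleCat.of R R))) ∧
  (∀ k : ℕ, 0 < k → Subsingleton (extGrp R k (ModuleCat.of R (Module.Dual R M)) (ModuleCat.of R R)))

def GdimLE (R : Type) [CommRing R] : ℕ → ModuleCat R → Prop
  | 0, M => TotRefl R M
  | (n+1), M => ∃ (G : ModuleCat R) (f : G →ₗ[R] M),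
      Function.Surjective f ∧ TotRefl R G ∧ GdimLE R n (ModuleCat.of R (LinearMap.ker f))

def FinGdim (R : Type) [CommRing R] (M : ModuleCat R) : Prop := ∃ n, GdimLE R n M

def Gdim (R : Type) [CommRing R] (M : ModuleCat R) : ℕ∞ :=
  sInf {n : ℕ∞ | ∃ k : ℕ, n = k ∧ GdimLE R k M}

def mDepth (R : Type) [CommRing R] (I : Ideal R) (M : Type) [AddCommGroup M] [Module R M] : ℕ∞ :=
  sSup {n : ℕ∞ | ∃ rs : List R, (∀ x ∈ rs, x ∈ I) ∧ RingTheory.Sequence.IsRegular M rs ∧ n = rs.length}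

/-- `I` is a `*`maximal (graded) ideal. -/
def IsStarMaximal (R : Type) [CommRing R] (𝒜 : ℤ → AddSubgroup R) [GradedRing 𝒜]
    (I : Ideal R) : Prop :=
  Ideal.IsHomogeneous 𝒜 I ∧ I ≠ ⊤ ∧
    ∀ J : Ideal R, Ideal.IsHomogeneous 𝒜 J → J ≠ ⊤ → I ≤ J → I = J

/-- `(R, m)` is a `*`local graded ring: `m` is the unique `*`maximal graded ideal. -/
def IsStarLocal (R : Type) [CommRing R] (𝒜 : ℤ → AddSubgroup R) [GradedRing 𝒜]
    (m : Ideal R) : Prop :=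
  IsStarMaximal R 𝒜 m ∧ ∀ I : Ideal R, IsStarMaximal R 𝒜 I → I = m

/-- Condition (P): every graded prime `p ≠ m` misses a homogeneous element of positive degree. -/
def ConditionP (R : Type) [CommRing R] (𝒜 : ℤ → AddSubgroup R) [GradedRing 𝒜]
    (m : Ideal R) : Prop :=
  ∀ p : Ideal R, p.IsPrime → Ideal.IsHomogeneous 𝒜 p → p ≠ m →
    ∃ i : ℤ, 0 < i ∧ ∃ r ∈ 𝒜 i, r ∉ p

/-- `R` has finite self-injective dimension. -/
def FinInjDim (R : Type) [CommRing R] : Prop :=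
  ∃ n : ℕ, ∀ (N : ModuleCat R) (k : ℕ), n < k → Subsingleton (extGrp R k N (ModuleCat.of R R))

/-- `R` is Gorenstein: every localization at a prime has finite self-injective dimension. -/
def IsGorensteinRing (R : Type) [CommRing R] : Prop :=
  ∀ (p : Ideal R) [p.IsPrime], FinInjDim (Localization.AtPrime p)

/-- A Noetherian local ring is Cohen–Macaulay if depth = dimension. -/
def IsCMLocalRing (R : Type) [CommRing R] [IsLocalRing R] : Prop :=
  (mDepth R (IsLocalRing.maximalIdeal R) R : WithBot ℕ∞) = ringKrullDim R

/-- `R` is a Cohen–Macaulay ring: all localizations at primes are Cohen–Macaulay local rings. -/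
def IsCMRing (R : Type) [CommRing R] : Prop :=
  ∀ (p : Ideal R) [p.IsPrime], IsCMLocalRing (Localization.AtPrime p)

/-- `M` is a Cohen–Macaulay module: for each prime in the support,
the localized module is Cohen–Macaulay (local depth = local dimension). -/
def IsCMModule (R : Type) [CommRing R] (M : Type) [AddCommGroup M] [Module R M] : Prop :=
  ∀ p : PrimeSpectrum R, p ∈ Module.support R M →
    (mDepth (Localization.AtPrime p.asIdeal)
        (IsLocalRing.maximalIdeal (Localization.AtPrime p.asIdeal))
        (LocalizedModule p.asIdeal.primeCompl M) : WithBot ℕ∞)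
      = ringKrullDim ((Localization.AtPrime p.asIdeal) ⧸
          Module.annihilator (Localization.AtPrime p.asIdeal)
            (LocalizedModule p.asIdeal.primeCompl M))

/-- The height of an ideal: the infimum of heights of primes containing it. -/
def idealHeight (R : Type) [CommRing R] (I : Ideal R) : ℕ∞ :=
  ⨅ (p : PrimeSpectrum R) (_ : I ≤ p.asIdeal), Order.height p

section avoidance

variable {R : Type} [CommRing R] (𝒜 : ℤ → AddSubgroup R) [GradedRing 𝒜]

lemma homog_le_of_forall {a q : Ideal R} (ha : Ideal.IsHomogeneous 𝒜 a)
    (h : ∀ x ∈ a, (∃ d : ℤ, x ∈ 𝒜 d) → x ∈ q) : a ≤ q := by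
  classical
  intro x hx
  rw [← DirectSum.sum_support_decompose 𝒜 x]
  exact Ideal.sum_mem _ fun i _ => h _ (ha i hx) ⟨i, SetLike.coe_mem _⟩

lemma combine_lemma {k : ℕ} (hk : 0 < k) (q : Fin (k+1) → Ideal R)
    (hq : ∀ i, (q i).IsPrime) (I : Ideal R)
    (w : Fin (k+1) → R) (D : Fin (k+1) → ℤ) (hD : ∀ i, 0 < D i)
    (hw : ∀ i, w i ∈ 𝒜 (D i)) (hwI : ∀ i, w i ∈ I)
    (hin : ∀ i, w i ∈ q i) (hout : ∀ i j, i ≠ j → w i ∉ q j) :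
    ∃ e : ℤ, 0 < e ∧ ∃ z, z ∈ 𝒜 e ∧ z ∈ I ∧ ∀ i, z ∉ q i := by
  haveI : Nonempty (Fin k) := Fin.pos_iff_nonempty.mp hk
  set E : ℤ := ∑ i : Fin k, D i.succ with hE
  have hEpos : 0 < E := Finset.sum_pos (fun i _ => hD i.succ) Finset.univ_nonempty
  have hEt : (E.toNat : ℤ) = E := Int.toNat_of_nonneg hEpos.le
  have hD0t : ((D 0).toNat : ℤ) = D 0 := Int.toNat_of_nonneg (hD 0).le
  have hEn : 0 < E.toNat := by omega
  have hD0n : 0 < (D 0).toNat := by have := hD 0; omega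
  set u : R := w 0 ^ E.toNat with hu
  set P : R := ∏ i : Fin k, w i.succ with hP
  set v : R := P ^ (D 0).toNat with hv
  have huA : u ∈ 𝒜 (E * D 0) := by
    have := SetLike.pow_mem_graded E.toNat (hw 0)
    rwa [nsmul_eq_mul, hEt] at this
  have hPA : P ∈ 𝒜 E :=
    SetLike.prod_mem_graded 𝒜 (fun i : Fin k => D i.succ) (fun i : Fin k => w i.succ) (fun i _ => hw i.succ)
  have hvA : v ∈ 𝒜 (E * D 0) := by
    have := SetLike.pow_mem_graded (D 0).toNat hPA
    rwa [nsmul_eq_mul, hD0t, mul_comm] at this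
  have hPI : P ∈ I := by
    obtain ⟨c, hc⟩ := Finset.dvd_prod_of_mem (fun i => w i.succ) (Finset.mem_univ (⟨0, hk⟩ : Fin k))
    rw [hP, hc]
    exact Ideal.mul_mem_right _ _ (hwI _)
  have hzI : u + v ∈ I :=
    Ideal.add_mem _ (Ideal.pow_mem_of_mem _ (hwI 0) _ hEn) (Ideal.pow_mem_of_mem _ hPI _ hD0n)
  refine ⟨E * D 0, mul_pos hEpos (hD 0), u + v, AddSubgroup.add_mem _ huA hvA, hzI, fun i => ?_⟩
  induction i using Fin.cases with
  | zero =>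
    haveI := hq 0
    intro hz0
    have hu0 : u ∈ q 0 := Ideal.pow_mem_of_mem _ (hin 0) _ hEn
    have hv0 : v ∈ (q 0).primeCompl :=
      Submonoid.pow_mem _
        (Submonoid.prod_mem _ (fun i _ => hout i.succ 0 (Fin.succ_ne_zero i))) _
    have : v ∈ q 0 := by
      have := (q 0).sub_mem hz0 hu0
      rwa [add_sub_cancel_left] at this
    exact hv0 this
  | succ j =>
    haveI := hq j.succ
    intro hzj
    have hPj : P ∈ q j.succ := by
      obtain ⟨c, hc⟩ := Finset.dvd_prod_of_mem (fun i => w i.succ) (Finset.mem_univ j)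
      rw [hP, hc]
      exact Ideal.mul_mem_right _ _ (hin j.succ)
    have hvj : v ∈ q j.succ := Ideal.pow_mem_of_mem _ hPj _ hD0n
    have huj : u ∈ (q j.succ).primeCompl :=
      Submonoid.pow_mem _ (hout 0 j.succ (Fin.succ_ne_zero j).symm) _
    have : u ∈ q j.succ := by
      have := (q j.succ).sub_mem hzj hvj
      rwa [add_sub_cancel_right] at this
    exact huj this

end avoidance


lemma graded_le_m {R : Type} [CommRing R] [IsNoetherianRing R]
    (𝒜 : ℤ → AddSubgroup R) [GradedRing 𝒜] {m : Ideal R} (hloc : IsStarLocal R 𝒜 m)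
    {p : Ideal R} (hph : Ideal.IsHomogeneous 𝒜 p) (hne : p ≠ ⊤) : p ≤ m := by
  obtain ⟨M, ⟨hpM, hMh, hMne⟩, hmax⟩ :=
    set_has_maximal_iff_noetherian.mpr (inferInstance : IsNoetherian R R)
      {J : Ideal R | p ≤ J ∧ Ideal.IsHomogeneous 𝒜 J ∧ J ≠ ⊤} ⟨p, le_refl p, hph, hne⟩
  have hM : IsStarMaximal R 𝒜 M := by
    refine ⟨hMh, hMne, fun J hJh hJne hMJ => ?_⟩
    by_contra hne'
    exact hmax J ⟨hpM.trans hMJ, hJh, hJne⟩ (lt_of_le_of_ne hMJ hne')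
  exact hpM.trans (hloc.2 M hM).le

lemma existsAvoid {R : Type} [CommRing R]
    (𝒜 : ℤ → AddSubgroup R) [GradedRing 𝒜] {m : Ideal R}
    (hP : ConditionP R 𝒜 m) :
    ∀ (k : ℕ) (q : Fin (k+1) → Ideal R),
      (∀ i, (q i).IsPrime ∧ Ideal.IsHomogeneous 𝒜 (q i) ∧ q i ≠ m) →
      ∃ e : ℤ, 0 < e ∧ ∃ r, r ∈ 𝒜 e ∧ ∀ i, r ∉ q i := by
  intro k
  induction k with
  | zero =>
    intro q hq
    obtain ⟨e, he, r, hr, hrq⟩ := hP (q 0) (hq 0).1 (hq 0).2.1 (hq 0).2.2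
    exact ⟨e, he, r, hr, fun i => by rw [Fin.fin_one_eq_zero i]; exact hrq⟩
  | succ k ih =>
    intro q hq
    have H : ∀ i : Fin (k+2), ∃ e : ℤ, 0 < e ∧ ∃ s, s ∈ 𝒜 e ∧
        ∀ j : Fin (k+1), s ∉ q (i.succAbove j) :=
      fun i => ih (fun j => q (i.succAbove j)) (fun j => hq _)
    choose e he s hs hsout using H
    by_cases hcase : ∃ i, s i ∉ q i
    · obtain ⟨i, hi⟩ := hcase
      refine ⟨e i, he i, s i, hs i, fun j => ?_⟩
      rcases eq_or_ne j i with rfl | hne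
      · exact hi
      · obtain ⟨j', hj'⟩ := Fin.exists_succAbove_eq hne
        rw [← hj']
        exact hsout i j'
    · push_neg at hcase
      obtain ⟨E, hE, z, hzA, _, hzq⟩ :=
        combine_lemma 𝒜 (Nat.succ_pos k) q (fun i => (hq i).1) ⊤ s e he hs
          (fun _ => trivial) hcase
          (fun i j hij => by
            obtain ⟨j', hj'⟩ := Fin.exists_succAbove_eq hij.symm
            rw [← hj']
            exact hsout i j')
      exact ⟨E, hE, z, hzA, hzq⟩

/-- **Graded prime avoidance.** In a `*`local graded commutative Noetherian ring with
condition (P), if all homogeneous elements of a graded ideal `a` lie in a finite union of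
graded prime ideals, then `a` is contained in one of them. -/
theorem stmt4 (R : Type) [CommRing R] [IsNoetherianRing R]
    (𝒜 : ℤ → AddSubgroup R) [GradedRing 𝒜] (m : Ideal R)
    (hloc : IsStarLocal R 𝒜 m) (hP : ConditionP R 𝒜 m)
    (a : Ideal R) (ha : Ideal.IsHomogeneous 𝒜 a)
    (n : ℕ) (p : Fin n → Ideal R)
    (hp : ∀ i, (p i).IsPrime ∧ Ideal.IsHomogeneous 𝒜 (p i))
    (hcover : ∀ x ∈ a, (∃ d : ℤ, x ∈ 𝒜 d) → ∃ i, x ∈ p i) :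
    ∃ i, a ≤ p i := by
  induction n with
  | zero =>
    obtain ⟨i, _⟩ := hcover 0 a.zero_mem ⟨0, (𝒜 0).zero_mem⟩
    exact i.elim0
  | succ n ih =>
    by_cases hm : ∃ i, p i = m
    · obtain ⟨i, him⟩ := hm
      refine ⟨i, homog_le_of_forall 𝒜 ha fun x hx hhom => ?_⟩
      obtain ⟨j, hj⟩ := hcover x hx hhom
      have hjm : p j ≤ m := graded_le_m 𝒜 hloc (hp j).2 (hp j).1.ne_top
      rw [him]
      exact hjm hj
    push_neg at hm
    rcases Nat.eq_zero_or_pos n with rfl | hn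
    · refine ⟨0, homog_le_of_forall 𝒜 ha fun x hx hhom => ?_⟩
      obtain ⟨j, hj⟩ := hcover x hx hhom
      rwa [Fin.fin_one_eq_zero j] at hj
    by_cases hred : ∃ i : Fin (n+1), ∀ x ∈ a, (∃ d : ℤ, x ∈ 𝒜 d) →
        ∃ j : Fin n, x ∈ p (i.succAbove j)
    · obtain ⟨i, hi⟩ := hred
      obtain ⟨j, hj⟩ := ih (fun j => p (i.succAbove j)) (fun j => hp _) hi
      exact ⟨i.succAbove j, hj⟩
    push_neg at hred
    exfalso
    choose x hxa hxh hxout using hred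
    choose d hxd using hxh
    obtain ⟨e, he, r, hr, hrout⟩ :=
      existsAvoid 𝒜 hP n p (fun i => ⟨(hp i).1, (hp i).2, hm i⟩)
    set ki : Fin (n+1) → ℕ := fun i => (d i).natAbs + 1 with hki
    set y : Fin (n+1) → R := fun i => x i * r ^ ki i with hy
    set D : Fin (n+1) → ℤ := fun i => d i + (ki i : ℤ) * e with hD
    have hDpos : ∀ i, 0 < D i := by
      intro i
      have h1 : ((ki i : ℤ)) ≤ (ki i : ℤ) * e :=
        le_mul_of_one_le_right (Int.natCast_nonneg _) (by omega)
      have h2 : (ki i : ℤ) = |d i| + 1 := by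
        simp only [hki]
        rw [Int.abs_eq_natAbs]
        push_cast
        ring
      have h3 := neg_abs_le (d i)
      simp only [hD]
      linarith
    have hyA : ∀ i, y i ∈ 𝒜 (D i) := by
      intro i
      have := SetLike.mul_mem_graded (hxd i) (SetLike.pow_mem_graded (ki i) hr)
      rwa [nsmul_eq_mul] at this
    have hya : ∀ i, y i ∈ a := fun i => Ideal.mul_mem_right _ _ (hxa i)
    have hyout : ∀ i j, i ≠ j → y i ∉ p j := by
      intro i j hij hmem
      haveI hpj := (hp j).1
      rcases hpj.mem_or_mem hmem with h | h
      · obtain ⟨j', hj'⟩ := Fin.exists_succAbove_eq hij.symm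
        rw [← hj'] at h
        exact hxout i j' h
      · exact hrout j (hpj.mem_of_pow_mem _ h)
    have hyin : ∀ i, y i ∈ p i := by
      intro i
      obtain ⟨j, hj⟩ := hcover _ (hya i) ⟨D i, hyA i⟩
      rcases eq_or_ne j i with rfl | hne
      · exact hj
      · exact absurd hj (hyout i j hne.symm)
    obtain ⟨E, hE, z, hzA, hzI, hzq⟩ :=
      combine_lemma 𝒜 hn p (fun i => (hp i).1) a y D hDpos hyA hya hyin hyout
    obtain ⟨i, hi⟩ := hcover z hzI ⟨E, hzA⟩
    exact hzq i hi


end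
end

section
/- Let (R, m) be a *local graded commutative Noetherian ring with condition (P) and depth(m, R) = 0. If M is a finitely generated graded R-module with Hom_R(M, R) = 0, then M = 0. -/
open CategoryTheory

noncomputable section

/-! Since `Hom_R(M, R) = 0`, the annihilator of `M` contains an `R`-regular element, which cannot
lie in `m` because `depth(m, R) = 0`. The annihilator of a graded module is homogeneous, and in a
`*`local Noetherian ring every proper homogeneous ideal lies in `m`; so the annihilator is `R`. -/

section GradedAnnihilator

open DirectSum

variable {ι σ τ R M : Type*} [DecidableEq ι] [AddRightCancelMonoid ι]
  [CommRing R] [SetLike σ R] [AddSubmonoidClass σ R] (𝒜 : ι → σ) [GradedRing 𝒜]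
  [AddCommGroup M] [Module R M] [SetLike τ M] [AddSubmonoidClass τ M]

theorem coe_decompose_smul_add_of_right_mem (ℳ : ι → τ) [Decomposition ℳ]
    [SetLike.GradedSMul 𝒜 ℳ] (a : R) {i d : ι} {x : M} (hx : x ∈ ℳ d) :
    (decompose ℳ (a • x) (i + d) : M) = (decompose 𝒜 a i : R) • x := by
  induction a using Decomposition.inductionOn 𝒜 with
  | zero => simp
  | @homogeneous k a =>
    have hax : (a : R) • x ∈ ℳ (k + d) := SetLike.GradedSMul.smul_mem a.2 hx
    by_cases hki : k = i
    · subst hki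
      rw [decompose_of_mem_same ℳ hax, decompose_of_mem_same 𝒜 a.2]
    · rw [decompose_of_mem_ne ℳ hax (by simpa using hki), decompose_of_mem_ne 𝒜 a.2 hki,
        zero_smul]
  | add a b ha hb =>
    rw [add_smul, decompose_add, decompose_add, DirectSum.add_apply, DirectSum.add_apply,
      AddMemClass.coe_add, AddMemClass.coe_add, ha, hb, add_smul]

theorem Module.annihilator_isHomogeneous (ℳ : ι → τ) [Decomposition ℳ]
    [SetLike.GradedSMul 𝒜 ℳ] : (Module.annihilator R M).IsHomogeneous 𝒜 := by
  intro i a ha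
  rw [Module.mem_annihilator] at ha ⊢
  intro x
  classical
  rw [← sum_support_decompose ℳ x, Finset.smul_sum]
  refine Finset.sum_eq_zero fun d _ => ?_
  rw [← coe_decompose_smul_add_of_right_mem 𝒜 ℳ a (decompose ℳ x d).2, ha, decompose_zero,
    DirectSum.zero_apply, ZeroMemClass.coe_zero]

end GradedAnnihilator

theorem exists_isStarMaximal_le {R : Type} [CommRing R] [IsNoetherianRing R]
    {𝒜 : ℤ → AddSubgroup R} [GradedRing 𝒜] {I : Ideal R} (hI : I.IsHomogeneous 𝒜)
    (hItop : I ≠ ⊤) : ∃ J, IsStarMaximal R 𝒜 J ∧ I ≤ J := by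
  obtain ⟨J, hIJ, ⟨hJ, hJtop⟩, hJmax⟩ :=
    exists_maximal_ge_of_wellFoundedGT (fun J : Ideal R => J.IsHomogeneous 𝒜 ∧ J ≠ ⊤) I ⟨hI, hItop⟩
  exact ⟨J, ⟨hJ, hJtop, fun K hK hKtop hJK => le_antisymm hJK (hJmax ⟨hK, hKtop⟩ hJK)⟩, hIJ⟩

theorem IsStarLocal.le_of_isHomogeneous {R : Type} [CommRing R] [IsNoetherianRing R]
    {𝒜 : ℤ → AddSubgroup R} [GradedRing 𝒜] {m : Ideal R} (hm : IsStarLocal R 𝒜 m)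
    {I : Ideal R} (hI : I.IsHomogeneous 𝒜) (hItop : I ≠ ⊤) : I ≤ m := by
  obtain ⟨J, hJ, hIJ⟩ := exists_isStarMaximal_le hI hItop
  exact hm.2 J hJ ▸ hIJ

theorem one_le_mDepth_of_isSMulRegular {R : Type} [CommRing R] {I : Ideal R} {M : Type}
    [AddCommGroup M] [Module R M] (hIM : I • (⊤ : Submodule R M) ≠ ⊤) {x : R} (hx : x ∈ I)
    (hreg : IsSMulRegular M x) : 1 ≤ mDepth R I M := by
  have hxI : Ideal.ofList [x] ≤ I := by simpa [Ideal.ofList_singleton, Ideal.span_le] using hx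
  have hseq : RingTheory.Sequence.IsRegular M [x] :=
    (RingTheory.Sequence.isRegular_iff M [x]).mpr
      ⟨(RingTheory.Sequence.isWeaklyRegular_singleton_iff M x).mpr hreg,
        fun htop => hIM (top_le_iff.mp (htop.le.trans (Submodule.smul_mono_left hxI)))⟩
  exact le_sSup ⟨[x], by simpa using hx, hseq, by simp⟩

theorem not_isSMulRegular_of_mDepth_eq_zero {R : Type} [CommRing R] {I : Ideal R}
    (hdepth : mDepth R I R = 0) (hI : I ≠ ⊤) {x : R} (hx : x ∈ I) : ¬IsSMulRegular R x := by
  intro hreg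
  have hIR : I • (⊤ : Ideal R) ≠ ⊤ := by rwa [Ideal.smul_eq_mul, Ideal.mul_top]
  simpa [hdepth] using one_le_mDepth_of_isSMulRegular hIR hx hreg

theorem stmt8_general (R : Type) [CommRing R] [IsNoetherianRing R]
    (𝒜 : ℤ → AddSubgroup R) [GradedRing 𝒜] (m : Ideal R)
    (hloc : IsStarLocal R 𝒜 m)
    (hdR : mDepth R m R = 0)
    (M : Type) [AddCommGroup M] [Module R M] [Module.Finite R M]
    (ℳ : ℤ → AddSubgroup M) [SetLike.GradedSMul 𝒜 ℳ] [DirectSum.Decomposition ℳ]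
    (h : Subsingleton (Module.Dual R M)) :
    Subsingleton M := by
  obtain ⟨r, hr_ann, hr_reg⟩ := (IsSMulRegular.subsingleton_linearMap_iff (M := R)).mp h
  have hr_m : r ∉ m := fun hrm => not_isSMulRegular_of_mDepth_eq_zero hdR hloc.1.2.1 hrm hr_reg
  rw [← Module.annihilator_eq_top_iff (R := R)]
  by_contra hne
  exact hr_m (hloc.le_of_isHomogeneous (Module.annihilator_isHomogeneous 𝒜 ℳ) hne hr_ann)

/-- Let `(R, m)` be a `*`local graded commutative Noetherian ring with condition (P) and
`depth(m, R) = 0`.  If `M` is a finite graded `R`-module with `Hom_R(M, R) = 0`,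
then `M = 0`. -/
theorem stmt8 (R : Type) [CommRing R] [IsNoetherianRing R]
    (𝒜 : ℤ → AddSubgroup R) [GradedRing 𝒜] (m : Ideal R)
    (hloc : IsStarLocal R 𝒜 m) (hP : ConditionP R 𝒜 m)
    (hdR : mDepth R m R = 0)
    (M : Type) [AddCommGroup M] [Module R M] [Module.Finite R M]
    (ℳ : ℤ → AddSubgroup M) [SetLike.GradedSMul 𝒜 ℳ] [DirectSum.Decomposition ℳ]
    (h : Subsingleton (Module.Dual R M)) :
    Subsingleton M :=
  stmt8_general R 𝒜 m hloc hdR M ℳ h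

end
end
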